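/- Let Δ = a₁b₀ − a₀b₁ ≠ 0 and Θ = a₁b₀ + a₀b₁, h = α(v²τ − κ), b₀b₁ ≠ 0. Define λ₀ = −a₀a₁α(BvΔ + hΘ)/Δ², λ₁ = [αb₀b₁(BvΘΔ + hΘ²) + λ₃a₀a₁Δ²]/(b₀b₁Δ²), λ₂ = −[αb₀²b₁²(BvΔ + hΘ) + λ₃Δ²Θ]/(b₀b₁Δ²), A = −[−2hαb₀²b₁² + λ₃Δ²]/(αb₀b₁Δ) with α ≠ 0. Then u(t,x) = (a₀ + a₁e^{α(x+vt)})/(b₀ + b₁e^{α(x+vt)}) satisfies τ·u_tt + A·u·u_x + B·u_t − κ·u_xx = λ₀ + λ₁u + λ₂u² + λ₃u³ on the region where b₀ + b₁e^{α(x+vt)} ≠ 0. -/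

import Mathlib

noncomputable def pdt (u : ℝ → ℝ → ℝ) (t x : ℝ) : ℝ := deriv (fun s => u s x) t
noncomputable def pdx (u : ℝ → ℝ → ℝ) (t x : ℝ) : ℝ := deriv (fun y => u t y) x
noncomputable def pdtt (u : ℝ → ℝ → ℝ) (t x : ℝ) : ℝ := deriv (fun s => pdt u s x) t
noncomputable def pdxx (u : ℝ → ℝ → ℝ) (t x : ℝ) : ℝ := deriv (fun y => pdx u t y) x

/-!
The solution is a travelling wave `u t x = f (α * (x + v * t))`, and the profile
`f z = (a₀ + a₁ eᶻ) / (b₀ + b₁ eᶻ)` solves the Riccati equation `f' = P f` with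
`P y = (b₀ y - a₀) (a₁ - b₁ y) / Δ`, so `f'' = P'(f) P(f)`. Since `τ (α v)² - κ α² = α h`, the
left-hand side of the PDE becomes `α (h P'(y) + A y + B v) P(y)` at `y = u t x`, a cubic polynomial
in `y`; the values of `λ₀, …, λ₃` and `A` are exactly what makes its coefficients match.
-/

open Real Filter Topology

lemma deriv_comp_const_add_mul (g : ℝ → ℝ) (a c s : ℝ) :
    deriv (fun s => g (a + c * s)) s = c * deriv g (a + c * s) :=
  (deriv_comp_mul_left c (fun y => g (a + y)) s).trans <| by
    rw [deriv_comp_const_add, smul_eq_mul]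

section TravelingWave

/- No differentiability of `g` is needed: where `g` is not differentiable both sides are `0`. -/
variable (g : ℝ → ℝ) (α v t x : ℝ)

lemma pdt_travelingWave :
    pdt (fun t x => g (α * (x + v * t))) t x = α * v * deriv g (α * (x + v * t)) := by
  have hz : ∀ s, α * (x + v * s) = α * x + α * v * s := fun s => by ring
  simp only [pdt, hz, deriv_comp_const_add_mul]

lemma pdx_travelingWave :
    pdx (fun t x => g (α * (x + v * t))) t x = α * deriv g (α * (x + v * t)) := by
  have hz : ∀ y, α * (y + v * t) = α * v * t + α * y := fun y => by ring
  simp only [pdx, hz, deriv_comp_const_add_mul]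

lemma pdtt_travelingWave :
    pdtt (fun t x => g (α * (x + v * t))) t x =
      (α * v) ^ 2 * deriv (deriv g) (α * (x + v * t)) := by
  have h := pdt_travelingWave (deriv g) α v t x
  simp only [pdt] at h
  simp only [pdtt, pdt_travelingWave, deriv_const_mul_field', h]
  ring

lemma pdxx_travelingWave :
    pdxx (fun t x => g (α * (x + v * t))) t x = α ^ 2 * deriv (deriv g) (α * (x + v * t)) := by
  have h := pdx_travelingWave (deriv g) α v t x
  simp only [pdx] at h
  simp only [pdxx, pdx_travelingWave, deriv_const_mul_field', h]
  ring

end TravelingWave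

section ExpRatio

variable (a0 a1 b0 b1 : ℝ)

noncomputable def expRatio (z : ℝ) : ℝ := (a0 + a1 * exp z) / (b0 + b1 * exp z)

noncomputable def expRatioRiccati (y : ℝ) : ℝ :=
  (b0 * y - a0) * (a1 - b1 * y) / (a1 * b0 - a0 * b1)

variable {a0 a1 b0 b1}

lemma hasDerivAt_expRatioRiccati (y : ℝ) :
    HasDerivAt (expRatioRiccati a0 a1 b0 b1)
      ((a1 * b0 + a0 * b1 - 2 * b0 * b1 * y) / (a1 * b0 - a0 * b1)) y := by
  have h := ((((hasDerivAt_id y).const_mul b0).sub_const a0).mul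
    (((hasDerivAt_id y).const_mul b1).const_sub a1)).div_const (a1 * b0 - a0 * b1)
  refine h.congr_deriv ?_
  simp only [id, mul_one]
  ring

lemma hasDerivAt_expRatio (hΔ : a1 * b0 - a0 * b1 ≠ 0) {z : ℝ} (hz : b0 + b1 * exp z ≠ 0) :
    HasDerivAt (expRatio a0 a1 b0 b1) (expRatioRiccati a0 a1 b0 b1 (expRatio a0 a1 b0 b1 z)) z := by
  have hnum := ((hasDerivAt_exp z).const_mul a1).const_add a0
  have hden := ((hasDerivAt_exp z).const_mul b1).const_add b0
  refine (hnum.div hden hz).congr_deriv ?_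
  -- `field_simp` needs the nonvanishing facts in its own normal form
  have hz' : b0 + exp z * b1 ≠ 0 := by rwa [mul_comm]
  have hΔ' : a1 * b0 - b1 * a0 ≠ 0 := by rwa [mul_comm b1]
  unfold expRatioRiccati expRatio
  field_simp
  ring

lemma deriv_expRatio_eventuallyEq (hΔ : a1 * b0 - a0 * b1 ≠ 0) {z : ℝ}
    (hz : b0 + b1 * exp z ≠ 0) :
    deriv (expRatio a0 a1 b0 b1) =ᶠ[𝓝 z] expRatioRiccati a0 a1 b0 b1 ∘ expRatio a0 a1 b0 b1 := by
  have hcont : ContinuousAt (fun w => b0 + b1 * exp w) z := by fun_prop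
  filter_upwards [hcont.eventually_ne hz] with w hw
  exact (hasDerivAt_expRatio hΔ hw).deriv

lemma deriv_deriv_expRatio (hΔ : a1 * b0 - a0 * b1 ≠ 0) {z : ℝ} (hz : b0 + b1 * exp z ≠ 0) :
    deriv (deriv (expRatio a0 a1 b0 b1)) z =
      (a1 * b0 + a0 * b1 - 2 * b0 * b1 * expRatio a0 a1 b0 b1 z) / (a1 * b0 - a0 * b1) *
        expRatioRiccati a0 a1 b0 b1 (expRatio a0 a1 b0 b1 z) := by
  rw [(deriv_expRatio_eventuallyEq hΔ hz).deriv_eq]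
  exact ((hasDerivAt_expRatioRiccati _).comp z (hasDerivAt_expRatio hΔ hz)).deriv

end ExpRatio

lemma expRatioRiccati_balance (τ B κ lam3 v a0 a1 b0 b1 α : ℝ)
    (hα : α ≠ 0) (hb : b0 * b1 ≠ 0)
    (Δ Θ h A lam0 lam1 lam2 : ℝ)
    (hΔ : Δ = a1 * b0 - a0 * b1) (hΔne : Δ ≠ 0)
    (hΘ : Θ = a1 * b0 + a0 * b1)
    (hh : h = α * (v ^ 2 * τ - κ))
    (hlam0 : lam0 = -(a0 * a1 * α) / Δ ^ 2 * (B * v * Δ + h * Θ))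
    (hlam1 : lam1 = (α * b0 * b1 * (B * v * Θ * Δ + h * Θ ^ 2) + lam3 * a0 * a1 * Δ ^ 2) /
      (b0 * b1 * Δ ^ 2))
    (hlam2 : lam2 = -(α * b0 ^ 2 * b1 ^ 2 * (B * v * Δ + h * Θ) + lam3 * Δ ^ 2 * Θ) /
      (b0 * b1 * Δ ^ 2))
    (hA : A = -(-2 * h * α * b0 ^ 2 * b1 ^ 2 + lam3 * Δ ^ 2) / (α * b0 * b1 * Δ)) (y : ℝ) :
    let P := expRatioRiccati a0 a1 b0 b1 y
    let P' := (a1 * b0 + a0 * b1 - 2 * b0 * b1 * y) / (a1 * b0 - a0 * b1)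
    τ * ((α * v) ^ 2 * (P' * P)) + A * y * (α * P) + B * (α * v * P) - κ * (α ^ 2 * (P' * P)) =
      lam0 + lam1 * y + lam2 * y ^ 2 + lam3 * y ^ 3 := by
  intro P P'
  have hb0 : b0 ≠ 0 := left_ne_zero_of_mul hb
  have hb1 : b1 ≠ 0 := right_ne_zero_of_mul hb
  simp only [P, P', expRatioRiccati, ← hΔ, ← hΘ]
  subst hh hlam0 hlam1 hlam2 hA
  field_simp
  subst hΔ hΘ
  ring

theorem stmt_2 (τ B κ lam3 v a0 a1 b0 b1 α : ℝ)
    (hα : α ≠ 0) (hb : b0 * b1 ≠ 0)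
    (Δ Θ h A lam0 lam1 lam2 : ℝ)
    (hΔ : Δ = a1 * b0 - a0 * b1) (hΔne : Δ ≠ 0)
    (hΘ : Θ = a1 * b0 + a0 * b1)
    (hh : h = α * (v ^ 2 * τ - κ))
    (hlam0 : lam0 = -(a0 * a1 * α) / Δ ^ 2 * (B * v * Δ + h * Θ))
    (hlam1 : lam1 = (α * b0 * b1 * (B * v * Θ * Δ + h * Θ ^ 2) + lam3 * a0 * a1 * Δ ^ 2) / (b0 * b1 * Δ ^ 2))
    (hlam2 : lam2 = -(α * b0 ^ 2 * b1 ^ 2 * (B * v * Δ + h * Θ) + lam3 * Δ ^ 2 * Θ) / (b0 * b1 * Δ ^ 2))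
    (hA : A = -(-2 * h * α * b0 ^ 2 * b1 ^ 2 + lam3 * Δ ^ 2) / (α * b0 * b1 * Δ))
    (u : ℝ → ℝ → ℝ)
    (hu : ∀ t x, u t x = (a0 + a1 * Real.exp (α * (x + v * t))) / (b0 + b1 * Real.exp (α * (x + v * t)))) :
    ∀ t x, b0 + b1 * Real.exp (α * (x + v * t)) ≠ 0 →
      τ * pdtt u t x + A * u t x * pdx u t x + B * pdt u t x - κ * pdxx u t x =
        lam0 + lam1 * u t x + lam2 * u t x ^ 2 + lam3 * u t x ^ 3 := by
  intro t x hD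
  obtain rfl : u = fun t x => expRatio a0 a1 b0 b1 (α * (x + v * t)) := funext₂ hu
  have hΔ' : a1 * b0 - a0 * b1 ≠ 0 := hΔ ▸ hΔne
  rw [pdtt_travelingWave, pdx_travelingWave, pdt_travelingWave, pdxx_travelingWave,
    deriv_deriv_expRatio hΔ' hD, (hasDerivAt_expRatio hΔ' hD).deriv]
  exact expRatioRiccati_balance τ B κ lam3 v a0 a1 b0 b1 α hα hb Δ Θ h A lam0 lam1 lam2
    hΔ hΔne hΘ hh hlam0 hlam1 hlam2 hA _
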